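/- arXiv:1911.12737 — 3 statements merged into one kernel-verified Lean document; each statement's English description precedes it below -/
import Mathlib

section
/- Correctness of zippy LL(1) parsing with derivatives: for every value type A, every LL(1) syntax s : Syntax A (i.e. ¬HasConflict s), every token sequence ts : List Token and every value v : A, fparse (focus s) ts = some v if and only if Matches s ts v. -/
set_option autoImplicit false

/-- Context-free syntaxes (value-aware context-free expressions). -/
inductive Syn (Token Kind : Type) (Var : Type → Type) : Type → Type 1 where
  | elem (k : Kind) : Syn Token Kind Var Token
  | fail {A : Type} : Syn Token Kind Var A
  | eps {A : Type} (v : A) : Syn Token Kind Var A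
  | disj {A : Type} (s₁ s₂ : Syn Token Kind Var A) : Syn Token Kind Var A
  | seqn {A B : Type} (s₁ : Syn Token Kind Var A) (s₂ : Syn Token Kind Var B) :
      Syn Token Kind Var (A × B)
  | map {A B : Type} (f : A → B) (s : Syn Token Kind Var A) : Syn Token Kind Var B
  | var {A : Type} (x : Var A) : Syn Token Kind Var A

section

variable {Token Kind : Type} {Var : Type → Type}
variable (kd : Token → Kind) (env : ∀ A : Type, Var A → Syn Token Kind Var A)

/-- Semantics of syntaxes. -/
inductive Matches : ∀ {A : Type}, Syn Token Kind Var A → List Token → A → Prop where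
  | elem {k : Kind} {t : Token} (h : kd t = k) : Matches (Syn.elem k) [t] t
  | eps {A : Type} (v : A) : Matches (Syn.eps v) [] v
  | disjL {A : Type} {s₁ s₂ : Syn Token Kind Var A} {ts : List Token} {v : A} :
      Matches s₁ ts v → Matches (Syn.disj s₁ s₂) ts v
  | disjR {A : Type} {s₁ s₂ : Syn Token Kind Var A} {ts : List Token} {v : A} :
      Matches s₂ ts v → Matches (Syn.disj s₁ s₂) ts v
  | seqn {A B : Type} {s₁ : Syn Token Kind Var A} {s₂ : Syn Token Kind Var B}
      {ts₁ ts₂ : List Token} {v₁ : A} {v₂ : B} :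
      Matches s₁ ts₁ v₁ → Matches s₂ ts₂ v₂ →
      Matches (Syn.seqn s₁ s₂) (ts₁ ++ ts₂) (v₁, v₂)
  | map {A B : Type} (f : A → B) {s : Syn Token Kind Var A} {ts : List Token} {v : A} :
      Matches s ts v → Matches (Syn.map f s) ts (f v)
  | var {A : Type} (x : Var A) {ts : List Token} {v : A} :
      Matches (env A x) ts v → Matches (Syn.var x) ts v

/-- Productivity. -/
inductive Productive : ∀ {A : Type}, Syn Token Kind Var A → Prop where
  | eps {A : Type} (v : A) : Productive (Syn.eps v)
  | elem (k : Kind) : Productive (Syn.elem k)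
  | disjL {A : Type} {s₁ s₂ : Syn Token Kind Var A} :
      Productive s₁ → Productive (Syn.disj s₁ s₂)
  | disjR {A : Type} {s₁ s₂ : Syn Token Kind Var A} :
      Productive s₂ → Productive (Syn.disj s₁ s₂)
  | seqn {A B : Type} {s₁ : Syn Token Kind Var A} {s₂ : Syn Token Kind Var B} :
      Productive s₁ → Productive s₂ → Productive (Syn.seqn s₁ s₂)
  | map {A B : Type} (f : A → B) {s : Syn Token Kind Var A} :
      Productive s → Productive (Syn.map f s)
  | var {A : Type} (x : Var A) : Productive (env A x) → Productive (Syn.var x)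

/-- Nullability, with associated value. -/
inductive Nullable : ∀ {A : Type}, Syn Token Kind Var A → A → Prop where
  | eps {A : Type} (v : A) : Nullable (Syn.eps v) v
  | disjL {A : Type} {s₁ s₂ : Syn Token Kind Var A} {v : A} :
      Nullable s₁ v → Nullable (Syn.disj s₁ s₂) v
  | disjR {A : Type} {s₁ s₂ : Syn Token Kind Var A} {v : A} :
      Nullable s₂ v → Nullable (Syn.disj s₁ s₂) v
  | seqn {A B : Type} {s₁ : Syn Token Kind Var A} {s₂ : Syn Token Kind Var B} {v₁ : A} {v₂ : B} :
      Nullable s₁ v₁ → Nullable s₂ v₂ → Nullable (Syn.seqn s₁ s₂) (v₁, v₂)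
  | map {A B : Type} (f : A → B) {s : Syn Token Kind Var A} {v : A} :
      Nullable s v → Nullable (Syn.map f s) (f v)
  | var {A : Type} (x : Var A) {v : A} : Nullable (env A x) v → Nullable (Syn.var x) v

/-- First sets: `InFirst env k s` means `k ∈ First s`. -/
inductive InFirst : ∀ {A : Type}, Kind → Syn Token Kind Var A → Prop where
  | elem (k : Kind) : InFirst k (Syn.elem k)
  | disjL {A : Type} {k : Kind} {s₁ s₂ : Syn Token Kind Var A} :
      InFirst k s₁ → InFirst k (Syn.disj s₁ s₂)
  | disjR {A : Type} {k : Kind} {s₁ s₂ : Syn Token Kind Var A} :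
      InFirst k s₂ → InFirst k (Syn.disj s₁ s₂)
  | seqnL {A B : Type} {k : Kind} {s₁ : Syn Token Kind Var A} {s₂ : Syn Token Kind Var B} :
      InFirst k s₁ → Productive env s₂ → InFirst k (Syn.seqn s₁ s₂)
  | seqnR {A B : Type} {k : Kind} {s₁ : Syn Token Kind Var A} {s₂ : Syn Token Kind Var B}
      {v : A} : Nullable env s₁ v → InFirst k s₂ → InFirst k (Syn.seqn s₁ s₂)
  | map {A B : Type} {k : Kind} (f : A → B) {s : Syn Token Kind Var A} :
      InFirst k s → InFirst k (Syn.map f s)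
  | var {A : Type} {k : Kind} (x : Var A) : InFirst k (env A x) → InFirst k (Syn.var x)

/-- Should-not-follow sets: `InSNF env k s` means `k ∈ ShouldNotFollow s`. -/
inductive InSNF : ∀ {A : Type}, Kind → Syn Token Kind Var A → Prop where
  | disjL {A : Type} {k : Kind} {s₁ s₂ : Syn Token Kind Var A} :
      InSNF k s₁ → InSNF k (Syn.disj s₁ s₂)
  | disjR {A : Type} {k : Kind} {s₁ s₂ : Syn Token Kind Var A} :
      InSNF k s₂ → InSNF k (Syn.disj s₁ s₂)
  | disjFN {A : Type} {k : Kind} {s₁ s₂ : Syn Token Kind Var A} {v : A} :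
      InFirst env k s₁ → Nullable env s₂ v → InSNF k (Syn.disj s₁ s₂)
  | disjNF {A : Type} {k : Kind} {s₁ s₂ : Syn Token Kind Var A} {v : A} :
      Nullable env s₁ v → InFirst env k s₂ → InSNF k (Syn.disj s₁ s₂)
  | seqnL {A B : Type} {k : Kind} {s₁ : Syn Token Kind Var A} {s₂ : Syn Token Kind Var B}
      {v : B} : InSNF k s₁ → Nullable env s₂ v → InSNF k (Syn.seqn s₁ s₂)
  | seqnR {A B : Type} {k : Kind} {s₁ : Syn Token Kind Var A} {s₂ : Syn Token Kind Var B} :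
      Productive env s₁ → InSNF k s₂ → InSNF k (Syn.seqn s₁ s₂)
  | map {A B : Type} {k : Kind} (f : A → B) {s : Syn Token Kind Var A} :
      InSNF k s → InSNF k (Syn.map f s)
  | var {A : Type} {k : Kind} (x : Var A) : InSNF k (env A x) → InSNF k (Syn.var x)

/-- LL(1) conflicts. A syntax `s` is LL(1) iff `¬ HasConflict env s`. -/
inductive HasConflict : ∀ {A : Type}, Syn Token Kind Var A → Prop where
  | disjNN {A : Type} {s₁ s₂ : Syn Token Kind Var A} {v₁ v₂ : A} :
      Nullable env s₁ v₁ → Nullable env s₂ v₂ → HasConflict (Syn.disj s₁ s₂)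
  | disjFF {A : Type} {s₁ s₂ : Syn Token Kind Var A} {k : Kind} :
      InFirst env k s₁ → InFirst env k s₂ → HasConflict (Syn.disj s₁ s₂)
  | disjL {A : Type} {s₁ s₂ : Syn Token Kind Var A} :
      HasConflict s₁ → HasConflict (Syn.disj s₁ s₂)
  | disjR {A : Type} {s₁ s₂ : Syn Token Kind Var A} :
      HasConflict s₂ → HasConflict (Syn.disj s₁ s₂)
  | seqnSF {A B : Type} {s₁ : Syn Token Kind Var A} {s₂ : Syn Token Kind Var B} {k : Kind} :
      InSNF env k s₁ → InFirst env k s₂ → HasConflict (Syn.seqn s₁ s₂)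
  | seqnL {A B : Type} {s₁ : Syn Token Kind Var A} {s₂ : Syn Token Kind Var B} :
      HasConflict s₁ → HasConflict (Syn.seqn s₁ s₂)
  | seqnR {A B : Type} {s₁ : Syn Token Kind Var A} {s₂ : Syn Token Kind Var B} :
      HasConflict s₂ → HasConflict (Syn.seqn s₁ s₂)
  | map {A B : Type} (f : A → B) {s : Syn Token Kind Var A} :
      HasConflict s → HasConflict (Syn.map f s)
  | var {A : Type} (x : Var A) : HasConflict (env A x) → HasConflict (Syn.var x)

end

/-- Layers of a context, with above type `A` and below type `B`. -/
inductive Layer (Token Kind : Type) (Var : Type → Type) : Type → Type → Type 1 where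
  | apply {A B : Type} (f : A → B) : Layer Token Kind Var A B
  | prepend {A C : Type} (v : C) : Layer Token Kind Var A (C × A)
  | followBy {A C : Type} (s : Syn Token Kind Var C) : Layer Token Kind Var A (A × C)

/-- Type-aligned contexts (stacks of layers). -/
inductive Ctx (Token Kind : Type) (Var : Type → Type) : Type → Type → Type 1 where
  | nil {A : Type} : Ctx Token Kind Var A A
  | cons {A B C : Type} (l : Layer Token Kind Var A B) (c : Ctx Token Kind Var B C) :
      Ctx Token Kind Var A C

section

variable {Token Kind : Type} {Var : Type → Type}

def Ctx.isNil : ∀ {A B : Type}, Ctx Token Kind Var A B → Bool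
  | _, _, Ctx.nil => true
  | _, _, Ctx.cons _ _ => false

/-- Unfocusing a focused syntax. -/
def unfocus : ∀ {A B : Type}, Syn Token Kind Var A → Ctx Token Kind Var A B →
    Syn Token Kind Var B
  | _, _, s, Ctx.nil => s
  | _, _, s, Ctx.cons (Layer.apply f) c => unfocus (Syn.map f s) c
  | _, _, s, Ctx.cons (Layer.prepend v) c => unfocus (Syn.seqn (Syn.eps v) s) c
  | _, _, s, Ctx.cons (Layer.followBy s') c => unfocus (Syn.seqn s s') c

/-- Focused syntaxes with below type `B`. -/
def Focused (Token Kind : Type) (Var : Type → Type) (B : Type) : Type 1 :=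
  (A : Type) × Syn Token Kind Var A × Ctx Token Kind Var A B

def unfocusF {B : Type} (fs : Focused Token Kind Var B) : Syn Token Kind Var B :=
  unfocus fs.2.1 fs.2.2

def focusF {A : Type} (s : Syn Token Kind Var A) : Focused Token Kind Var A :=
  ⟨A, s, Ctx.nil⟩

/-- Plugging a value into a context. -/
def plug : ∀ {A B : Type}, A → Ctx Token Kind Var A B → Focused Token Kind Var B
  | A, _, v, Ctx.nil => ⟨A, Syn.eps v, Ctx.nil⟩
  | _, _, v, Ctx.cons (Layer.apply f) c => plug (f v) c
  | _, _, v, Ctx.cons (Layer.prepend v') c => plug (v', v) c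
  | _, _, v, Ctx.cons (Layer.followBy s) c => ⟨_, s, Ctx.cons (Layer.prepend v) c⟩

end

/-!
Parsing keeps a focused syntax that is LL(1) and accepts, on the remaining input, exactly the
values the original syntax accepts after the consumed prefix. For the next token `t`, `locate`
and `pierce` only discard alternatives that cannot start with `t`: a discarded branch could
start with `t` only by matching the empty word and letting the context read `t`, which puts
`kd t` into a should-not-follow set facing a first set that contains it, an LL(1) conflict.
Null values of LL(1) syntaxes are unique, so plugging them into the context loses no parse,
and `result` reads off the value of the empty input the same way.
-/

section Inversion

variable {Token Kind : Type} {Var : Type → Type}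

/-- Derivations about `Syn.seqn s₁ s₂` are inverted through this, since `cases` cannot solve
`A × B = A' × B'`. -/
def SeqnCase (P : ∀ {A B : Type}, Syn Token Kind Var A → Syn Token Kind Var B → Prop) :
    ∀ {C : Type}, Syn Token Kind Var C → Prop
  | _, .seqn s₁ s₂ => P s₁ s₂
  | _, _ => True

def SeqnCaseVal
    (P : ∀ {A B : Type}, Syn Token Kind Var A → Syn Token Kind Var B → A × B → Prop) :
    ∀ {C : Type}, Syn Token Kind Var C → C → Prop
  | _, .seqn s₁ s₂, p => P s₁ s₂ p
  | _, _, _ => True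

variable {kd : Token → Kind} {env : ∀ A : Type, Var A → Syn Token Kind Var A}
variable {A B : Type} {s₁ : Syn Token Kind Var A} {s₂ : Syn Token Kind Var B}

theorem matches_seqn_iff {ts : List Token} {p : A × B} :
    Matches kd env (.seqn s₁ s₂) ts p ↔
      ∃ ts₁ ts₂, ts = ts₁ ++ ts₂ ∧ Matches kd env s₁ ts₁ p.1 ∧ Matches kd env s₂ ts₂ p.2 := by
  refine ⟨fun h => ?_, fun ⟨ts₁, ts₂, hts, h₁, h₂⟩ => hts ▸ .seqn h₁ h₂⟩
  have inv : ∀ {C : Type} {u : Syn Token Kind Var C} {ts : List Token} {p : C},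
      Matches kd env u ts p → SeqnCaseVal (fun s₁ s₂ p => ∃ ts₁ ts₂, ts = ts₁ ++ ts₂ ∧
        Matches kd env s₁ ts₁ p.1 ∧ Matches kd env s₂ ts₂ p.2) u p := by
    intro C u ts p h
    cases h <;> first | exact ⟨_, _, rfl, ‹_›, ‹_›⟩ | trivial
  exact inv h

theorem productive_seqn_iff :
    Productive env (.seqn s₁ s₂) ↔ Productive env s₁ ∧ Productive env s₂ := by
  refine ⟨fun h => ?_, fun ⟨h₁, h₂⟩ => .seqn h₁ h₂⟩
  have inv : ∀ {C : Type} {u : Syn Token Kind Var C}, Productive env u →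
      SeqnCase (fun s₁ s₂ => Productive env s₁ ∧ Productive env s₂) u := by
    intro C u h
    cases h <;> first | exact ⟨‹_›, ‹_›⟩ | trivial
  exact inv h

theorem inFirst_seqn_iff {k : Kind} :
    InFirst env k (.seqn s₁ s₂) ↔
      InFirst env k s₁ ∧ Productive env s₂ ∨ ∃ v, Nullable env s₁ v ∧ InFirst env k s₂ := by
  refine ⟨fun h => ?_, ?_⟩
  · have inv : ∀ {C : Type} {u : Syn Token Kind Var C}, InFirst env k u →
        SeqnCase (fun s₁ s₂ => InFirst env k s₁ ∧ Productive env s₂ ∨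
          ∃ v, Nullable env s₁ v ∧ InFirst env k s₂) u := by
      intro C u h
      cases h <;> first | exact .inl ⟨‹_›, ‹_›⟩ | exact .inr ⟨_, ‹_›, ‹_›⟩ | trivial
    exact inv h
  · rintro (⟨h₁, h₂⟩ | ⟨v, h₁, h₂⟩)
    exacts [.seqnL h₁ h₂, .seqnR h₁ h₂]

theorem inSNF_seqn_iff {k : Kind} :
    InSNF env k (.seqn s₁ s₂) ↔
      (∃ v, InSNF env k s₁ ∧ Nullable env s₂ v) ∨ Productive env s₁ ∧ InSNF env k s₂ := by
  refine ⟨fun h => ?_, ?_⟩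
  · have inv : ∀ {C : Type} {u : Syn Token Kind Var C}, InSNF env k u →
        SeqnCase (fun s₁ s₂ => (∃ v, InSNF env k s₁ ∧ Nullable env s₂ v) ∨
          Productive env s₁ ∧ InSNF env k s₂) u := by
      intro C u h
      cases h <;> first | exact .inl ⟨_, ‹_›, ‹_›⟩ | exact .inr ⟨‹_›, ‹_›⟩ | trivial
    exact inv h
  · rintro (⟨v, h₁, h₂⟩ | ⟨h₁, h₂⟩)
    exacts [.seqnL h₁ h₂, .seqnR h₁ h₂]

theorem hasConflict_seqn_iff :
    HasConflict env (.seqn s₁ s₂) ↔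
      (∃ k, InSNF env k s₁ ∧ InFirst env k s₂) ∨ HasConflict env s₁ ∨ HasConflict env s₂ := by
  refine ⟨fun h => ?_, ?_⟩
  · have inv : ∀ {C : Type} {u : Syn Token Kind Var C}, HasConflict env u →
        SeqnCase (fun s₁ s₂ => (∃ k, InSNF env k s₁ ∧ InFirst env k s₂) ∨
          HasConflict env s₁ ∨ HasConflict env s₂) u := by
      intro C u h
      cases h <;> first
        | exact .inl ⟨_, ‹_›, ‹_›⟩ | exact .inr (.inl ‹_›) | exact .inr (.inr ‹_›) | trivial
    exact inv h
  · rintro (⟨k, h₁, h₂⟩ | h | h)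
    exacts [.seqnSF h₁ h₂, .seqnL h, .seqnR h]

end Inversion

section Semantics

variable {Token Kind : Type} {Var : Type → Type}
variable {kd : Token → Kind} {env : ∀ A : Type, Var A → Syn Token Kind Var A}
variable {A : Type} {s : Syn Token Kind Var A} {ts : List Token} {v : A}

theorem matches_elem_iff {k : Kind} {t : Token} :
    Matches kd env (.elem k) ts t ↔ ts = [t] ∧ kd t = k := by
  refine ⟨fun h => ?_, fun ⟨hts, hk⟩ => hts ▸ .elem hk⟩
  cases h
  exact ⟨rfl, ‹_›⟩

theorem matches_eps_iff {a : A} : Matches kd env (.eps a) ts v ↔ ts = [] ∧ a = v := by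
  refine ⟨fun h => ?_, fun ⟨hts, hv⟩ => hts ▸ hv ▸ .eps a⟩
  cases h
  exact ⟨rfl, rfl⟩

theorem matches_disj_iff {s₁ s₂ : Syn Token Kind Var A} :
    Matches kd env (.disj s₁ s₂) ts v ↔ Matches kd env s₁ ts v ∨ Matches kd env s₂ ts v := by
  refine ⟨fun h => ?_, fun h => h.elim .disjL .disjR⟩
  cases h
  exacts [.inl ‹_›, .inr ‹_›]

theorem matches_map_iff {B : Type} {f : A → B} {b : B} :
    Matches kd env (.map f s) ts b ↔ ∃ a, Matches kd env s ts a ∧ f a = b := by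
  refine ⟨fun h => ?_, fun ⟨a, h, hb⟩ => hb ▸ .map f h⟩
  cases h
  exact ⟨_, ‹_›, rfl⟩

theorem matches_var_iff {x : Var A} :
    Matches kd env (.var x) ts v ↔ Matches kd env (env A x) ts v := by
  refine ⟨fun h => ?_, .var x⟩
  cases h
  assumption

theorem Matches.productive (h : Matches kd env s ts v) : Productive env s := by
  induction h with
  | elem => exact .elem _
  | eps v => exact .eps v
  | disjL _ ih => exact .disjL ih
  | disjR _ ih => exact .disjR ih
  | seqn _ _ ih₁ ih₂ => exact .seqn ih₁ ih₂
  | map f _ ih => exact .map f ih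
  | var x _ ih => exact .var x ih

theorem Nullable.productive (h : Nullable env s v) : Productive env s := by
  induction h with
  | eps v => exact .eps v
  | disjL _ ih => exact .disjL ih
  | disjR _ ih => exact .disjR ih
  | seqn _ _ ih₁ ih₂ => exact .seqn ih₁ ih₂
  | map f _ ih => exact .map f ih
  | var x _ ih => exact .var x ih

theorem Nullable.matches (h : Nullable env s v) : Matches kd env s [] v := by
  induction h with
  | eps v => exact .eps v
  | disjL _ ih => exact .disjL ih
  | disjR _ ih => exact .disjR ih
  | seqn _ _ ih₁ ih₂ => exact .seqn ih₁ ih₂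
  | map f _ ih => exact .map f ih
  | var x _ ih => exact .var x ih

theorem Matches.nullable (h : Matches kd env s [] v) : Nullable env s v := by
  generalize hts : [] = ts at h
  induction h with
  | elem => cases hts
  | eps v => exact .eps v
  | disjL _ ih => exact .disjL (ih hts)
  | disjR _ ih => exact .disjR (ih hts)
  | seqn _ _ ih₁ ih₂ =>
    obtain ⟨h₁, h₂⟩ := List.append_eq_nil_iff.mp hts.symm
    exact .seqn (ih₁ h₁.symm) (ih₂ h₂.symm)
  | map f _ ih => exact .map f (ih hts)
  | var x _ ih => exact .var x (ih hts)

theorem Matches.inFirst {t : Token} (h : Matches kd env s (t :: ts) v) :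
    InFirst env (kd t) s := by
  generalize hts : t :: ts = us at h
  induction h generalizing t ts with
  | elem hk =>
    cases hts
    exact hk ▸ .elem _
  | eps => cases hts
  | disjL _ ih => exact .disjL (ih hts)
  | disjR _ ih => exact .disjR (ih hts)
  | @seqn _ _ _ _ ts₁ _ _ _ h₁ h₂ ih₁ ih₂ =>
    cases ts₁ with
    | nil => exact .seqnR h₁.nullable (ih₂ hts)
    | cons t' ts' =>
      cases hts
      exact .seqnL (ih₁ rfl) h₂.productive
  | map f _ ih => exact .map f (ih hts)
  | var x _ ih => exact .var x (ih hts)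

theorem Nullable.inSNF_of_inFirst {k : Kind} (hn : Nullable env s v) (hf : InFirst env k s) :
    InSNF env k s := by
  induction hn with
  | eps => cases hf
  | disjL hn ih =>
    cases hf with
    | disjL hf => exact .disjL (ih hf)
    | disjR hf => exact .disjNF hn hf
  | disjR hn ih =>
    cases hf with
    | disjL hf => exact .disjFN hf hn
    | disjR hf => exact .disjR (ih hf)
  | seqn hn₁ hn₂ ih₁ ih₂ =>
    rcases inFirst_seqn_iff.mp hf with ⟨hf₁, -⟩ | ⟨-, -, hf₂⟩
    · exact .seqnL (ih₁ hf₁) hn₂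
    · exact .seqnR hn₁.productive (ih₂ hf₂)
  | map f _ ih =>
    cases hf with
    | map _ hf => exact .map f (ih hf)
  | var x _ ih =>
    cases hf with
    | var _ hf => exact .var x (ih hf)

end Semantics

section Conflicts

variable {Token Kind : Type} {Var : Type → Type}

/-- Replacing `s` by `t` under any context keeps every conflict (`ConflictLE.unfocus`). -/
structure ConflictLE (env : ∀ A : Type, Var A → Syn Token Kind Var A) {A : Type}
    (s t : Syn Token Kind Var A) : Prop where
  inSNF : ∀ k, InSNF env k s → InSNF env k t
  productive : Productive env s → Productive env t
  hasConflict : HasConflict env s → HasConflict env t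

variable {env : ∀ A : Type, Var A → Syn Token Kind Var A}

namespace ConflictLE

variable {A : Type} {s t : Syn Token Kind Var A}

theorem eps_elem {a : Token} {k : Kind} :
    ConflictLE env (.eps a) (.elem k : Syn Token Kind Var Token) :=
  ⟨fun _ h => (nomatch h), fun _ => .elem k, fun h => (nomatch h)⟩

theorem eps_of_nullable {v : A} (hn : Nullable env s v) : ConflictLE env (.eps v) s :=
  ⟨fun _ h => (nomatch h), fun _ => hn.productive, fun h => (nomatch h)⟩

theorem disj_left : ConflictLE env s (.disj s t) := ⟨fun _ => .disjL, .disjL, .disjL⟩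

theorem disj_right : ConflictLE env t (.disj s t) := ⟨fun _ => .disjR, .disjR, .disjR⟩

theorem env_var {x : Var A} : ConflictLE env (env A x) (.var x) :=
  ⟨fun _ => .var x, .var x, .var x⟩

theorem map {B : Type} {f : A → B} (h : ConflictLE env s t) :
    ConflictLE env (.map f s) (.map f t) := by
  refine ⟨fun k hs => ?_, fun hs => ?_, fun hs => ?_⟩ <;> cases hs
  exacts [.map f (h.inSNF k ‹_›), .map f (h.productive ‹_›), .map f (h.hasConflict ‹_›)]

theorem seqn_left {B : Type} {u : Syn Token Kind Var B} (h : ConflictLE env s t) :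
    ConflictLE env (.seqn s u) (.seqn t u) := by
  refine ⟨fun k hs => ?_, fun hs => ?_, fun hs => ?_⟩
  · rcases inSNF_seqn_iff.mp hs with ⟨_, hs₁, hu⟩ | ⟨hp, hu⟩
    exacts [.seqnL (h.inSNF k hs₁) hu, .seqnR (h.productive hp) hu]
  · obtain ⟨hp, hu⟩ := productive_seqn_iff.mp hs
    exact .seqn (h.productive hp) hu
  · rcases hasConflict_seqn_iff.mp hs with ⟨k, hs₁, hu⟩ | hs₁ | hu
    exacts [.seqnSF (h.inSNF k hs₁) hu, .seqnL (h.hasConflict hs₁), .seqnR hu]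

theorem eps_seqn {C : Type} {w : C} (h : ConflictLE env s t) :
    ConflictLE env (.seqn (.eps w) s) (.seqn (.eps w) t) := by
  refine ⟨fun k hs => ?_, fun hs => ?_, fun hs => ?_⟩
  · rcases inSNF_seqn_iff.mp hs with ⟨_, hw, -⟩ | ⟨-, hs₂⟩
    exacts [(nomatch hw), .seqnR (.eps w) (h.inSNF k hs₂)]
  · exact .seqn (.eps w) (h.productive (productive_seqn_iff.mp hs).2)
  · rcases hasConflict_seqn_iff.mp hs with ⟨k, hw, -⟩ | hw | hs₂
    exacts [(nomatch hw), (nomatch hw), .seqnR (h.hasConflict hs₂)]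

theorem unfocus {B : Type} (h : ConflictLE env s t) (c : Ctx Token Kind Var A B)
    (hs : HasConflict env (unfocus s c)) : HasConflict env (unfocus t c) := by
  induction c with
  | nil => exact h.hasConflict hs
  | cons l c ih =>
    cases l with
    | apply f => exact ih h.map hs
    | prepend w => exact ih h.eps_seqn hs
    | followBy u => exact ih h.seqn_left hs

end ConflictLE

theorem HasConflict.unfocus {A B : Type} {s : Syn Token Kind Var A} (h : HasConflict env s)
    (c : Ctx Token Kind Var A B) : HasConflict env (unfocus s c) := by
  induction c with
  | nil => exact h
  | cons l c ih =>
    cases l with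
    | apply f => exact ih (.map f h)
    | prepend w => exact ih (.seqnR h)
    | followBy u => exact ih (.seqnL h)

end Conflicts

section Contexts

variable {Token Kind : Type} {Var : Type → Type}

/-- With `a` in its hole, the context `c` consumes `ts` and produces `b`. -/
def CtxMatches (kd : Token → Kind) (env : ∀ A : Type, Var A → Syn Token Kind Var A) :
    ∀ {A B : Type}, Ctx Token Kind Var A B → List Token → A → B → Prop
  | _, _, .nil, ts, a, b => ts = [] ∧ a = b
  | _, _, .cons (.apply f) c, ts, a, b => CtxMatches kd env c ts (f a) b
  | _, _, .cons (.prepend u) c, ts, a, b => CtxMatches kd env c ts (u, a) b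
  | _, _, .cons (.followBy s) c, ts, a, b =>
      ∃ ts₁ ts₂ w, ts = ts₁ ++ ts₂ ∧ Matches kd env s ts₁ w ∧ CtxMatches kd env c ts₂ (a, w) b

variable {kd : Token → Kind} {env : ∀ A : Type, Var A → Syn Token Kind Var A}
variable {A B : Type}

theorem matches_unfocus_iff (s : Syn Token Kind Var A) (c : Ctx Token Kind Var A B)
    (ts : List Token) (v : B) :
    Matches kd env (unfocus s c) ts v ↔
      ∃ ts₁ ts₂ a, ts = ts₁ ++ ts₂ ∧ Matches kd env s ts₁ a ∧ CtxMatches kd env c ts₂ a v := by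
  induction c generalizing ts with
  | nil => simp [unfocus, CtxMatches]
  | cons l c ih =>
    cases l with
    | apply f =>
      simp only [unfocus, CtxMatches, ih, matches_map_iff]
      constructor
      · rintro ⟨ts₁, ts₂, _, rfl, ⟨a, hm, rfl⟩, hc⟩
        exact ⟨ts₁, ts₂, a, rfl, hm, hc⟩
      · rintro ⟨ts₁, ts₂, a, rfl, hm, hc⟩
        exact ⟨ts₁, ts₂, f a, rfl, ⟨a, hm, rfl⟩, hc⟩
    | prepend u =>
      simp only [unfocus, CtxMatches, ih, matches_seqn_iff, matches_eps_iff]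
      constructor
      · rintro ⟨_, ts₂, p, rfl, ⟨_, ts₁, rfl, ⟨rfl, hu⟩, hm⟩, hc⟩
        subst hu
        exact ⟨ts₁, ts₂, p.2, by simp, hm, hc⟩
      · rintro ⟨ts₁, ts₂, a, rfl, hm, hc⟩
        exact ⟨ts₁, ts₂, (u, a), rfl, ⟨[], ts₁, rfl, ⟨rfl, rfl⟩, hm⟩, hc⟩
    | followBy s' =>
      simp only [unfocus, CtxMatches, ih, matches_seqn_iff]
      constructor
      · rintro ⟨_, ts₃, p, rfl, ⟨ts₁, ts₂, rfl, hm, hm'⟩, hc⟩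
        exact ⟨ts₁, ts₂ ++ ts₃, p.1, by simp, hm, ts₂, ts₃, p.2, rfl, hm', hc⟩
      · rintro ⟨ts₁, _, a, rfl, hm, ts₂, ts₃, w, rfl, hm', hc⟩
        exact ⟨ts₁ ++ ts₂, ts₃, (a, w), by simp, ⟨ts₁, ts₂, rfl, hm, hm'⟩, hc⟩

theorem matches_unfocus_eps_iff (a : A) (c : Ctx Token Kind Var A B) (ts : List Token) (v : B) :
    Matches kd env (unfocus (.eps a) c) ts v ↔ CtxMatches kd env c ts a v := by
  simp [matches_unfocus_iff, matches_eps_iff]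

theorem matches_unfocusF_plug_iff (a : A) (c : Ctx Token Kind Var A B) (ts : List Token)
    (v : B) : Matches kd env (unfocusF (plug a c)) ts v ↔ CtxMatches kd env c ts a v := by
  induction c with
  | nil => simp [plug, unfocusF, unfocus, CtxMatches, matches_eps_iff]
  | cons l c ih =>
    cases l with
    | apply f => exact ih (f a) v
    | prepend u => exact ih (u, a) v
    | followBy s' => exact matches_unfocus_iff s' (.cons (.prepend a) c) ts v

theorem matches_unfocus_iff_of_not_inFirst {s : Syn Token Kind Var A} {ts : List Token}
    (hts : ∀ t ∈ ts.head?, ¬ InFirst env (kd t) s) (c : Ctx Token Kind Var A B) (v : B) :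
    Matches kd env (unfocus s c) ts v ↔ ∃ a, Nullable env s a ∧ CtxMatches kd env c ts a v := by
  rw [matches_unfocus_iff]
  constructor
  · rintro ⟨ts₁, ts₂, a, rfl, hm, hc⟩
    cases ts₁ with
    | nil => exact ⟨a, hm.nullable, hc⟩
    | cons t _ => exact absurd hm.inFirst (hts t rfl)
  · rintro ⟨a, hn, hc⟩
    exact ⟨[], ts, a, rfl, hn.matches, hc⟩

/-- A `followBy` layer reading `t` right after `s` would create a `seqnSF` conflict. -/
theorem not_ctxMatches_cons_of_inSNF {s : Syn Token Kind Var A} {c : Ctx Token Kind Var A B}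
    {t : Token} {ts : List Token} {a : A} {v : B}
    (hnc : ¬ HasConflict env (unfocus s c)) (hsnf : InSNF env (kd t) s) :
    ¬ CtxMatches kd env c (t :: ts) a v := by
  induction c generalizing ts with
  | nil => exact fun h => nomatch h.1
  | cons l c ih =>
    cases l with
    | apply f => exact ih (s := .map f s) hnc (.map f hsnf)
    | prepend u => exact ih (s := .seqn (.eps u) s) hnc (.seqnR (.eps u) hsnf)
    | followBy s' =>
      rintro ⟨ts₁, ts₂, w, hts, hm, hc⟩
      cases ts₁ with
      | nil =>
        rw [List.nil_append] at hts
        exact ih (s := .seqn s s') hnc (.seqnL hsnf hm.nullable) (hts ▸ hc)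
      | cons t' ts' =>
        obtain ⟨rfl, -⟩ := List.cons.inj hts
        exact hnc ((HasConflict.seqnSF hsnf hm.inFirst).unfocus c)

end Contexts

section Lookahead

variable {Token Kind : Type} {Var : Type → Type}
variable {kd : Token → Kind} {env : ∀ A : Type, Var A → Syn Token Kind Var A}
variable {A B : Type}

@[simp]
theorem unfocusF_mk (s : Syn Token Kind Var A) (c : Ctx Token Kind Var A B) :
    unfocusF (⟨A, s, c⟩ : Focused Token Kind Var B) = unfocus s c :=
  rfl

theorem not_hasConflict_plug {s : Syn Token Kind Var A} {c : Ctx Token Kind Var A B} {w : A}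
    (hnc : ¬ HasConflict env (unfocus s c)) (hn : Nullable env s w) :
    ¬ HasConflict env (unfocusF (plug w c)) := by
  induction c with
  | nil => exact fun h => nomatch h
  | cons l c ih =>
    cases l with
    | apply f => exact ih (s := .map f s) hnc (.map f hn)
    | prepend u => exact ih (s := .seqn (.eps u) s) hnc (.seqn (.eps u) hn)
    | followBy s' => exact fun h => hnc ((ConflictLE.eps_of_nullable hn).seqn_left.unfocus c h)

/-- Plugging a value into a context removes its top layer, except that a top `followBy` layer
turns into a `prepend` layer, which the next plugging removes. -/
theorem Focused.plug_induction {P : Focused Token Kind Var B → Prop}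
    (step : ∀ {A : Type} (s : Syn Token Kind Var A) (c : Ctx Token Kind Var A B),
      (c.isNil = false → ∀ w, P (plug w c)) → P ⟨A, s, c⟩)
    (fs : Focused Token Kind Var B) : P fs := by
  have plugged : ∀ {A : Type} (c : Ctx Token Kind Var A B) (w : A), P (plug w c) := by
    intro A c
    clear fs
    induction c with
    | nil => exact fun w => step _ _ (fun h => nomatch h)
    | cons l c ih =>
      cases l with
      | apply f => exact fun w => ih step (f w)
      | prepend u => exact fun w => ih step (u, w)
      | followBy s' => exact fun w => step _ _ (fun _ w' => ih step (w, w'))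
  obtain ⟨A, s, c⟩ := fs
  exact step s c (fun _ => plugged c)

theorem matches_unfocus_disj_iff {s₁ s₂ : Syn Token Kind Var A} {c : Ctx Token Kind Var A B}
    {ts : List Token} {v : B} :
    Matches kd env (unfocus (.disj s₁ s₂) c) ts v ↔
      Matches kd env (unfocus s₁ c) ts v ∨ Matches kd env (unfocus s₂ c) ts v := by
  simp only [matches_unfocus_iff, matches_disj_iff, or_and_right, and_or_left, exists_or]

theorem not_matches_unfocus_of_inSNF {s s' : Syn Token Kind Var A} {c : Ctx Token Kind Var A B}
    {t : Token} {ts : List Token} {v : B} (hnc : ¬ HasConflict env (unfocus s' c))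
    (hf : ¬ InFirst env (kd t) s) (hsnf : ∀ a, Nullable env s a → InSNF env (kd t) s') :
    ¬ Matches kd env (unfocus s c) (t :: ts) v := by
  rw [matches_unfocus_iff_of_not_inFirst (by simpa using hf)]
  rintro ⟨a, hn, hc⟩
  exact not_ctxMatches_cons_of_inSNF hnc (hsnf a hn) hc

variable (kd env) in
def LookaheadEquiv (k : Kind) (fs fs' : Focused Token Kind Var B) : Prop :=
  ¬ HasConflict env (unfocusF fs') ∧ ∀ t ts v, kd t = k →
    (Matches kd env (unfocusF fs) (t :: ts) v ↔ Matches kd env (unfocusF fs') (t :: ts) v)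

namespace LookaheadEquiv

variable {k : Kind} {fs fs' fs'' : Focused Token Kind Var B}

theorem refl (h : ¬ HasConflict env (unfocusF fs)) : LookaheadEquiv kd env k fs fs :=
  ⟨h, fun _ _ _ _ => Iff.rfl⟩

theorem trans (h₁ : LookaheadEquiv kd env k fs fs') (h₂ : LookaheadEquiv kd env k fs' fs'') :
    LookaheadEquiv kd env k fs fs'' :=
  ⟨h₂.1, fun t ts v hk => (h₁.2 t ts v hk).trans (h₂.2 t ts v hk)⟩

theorem plug {s : Syn Token Kind Var A} {c : Ctx Token Kind Var A B} {w : A}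
    (hnc : ¬ HasConflict env (unfocus s c)) (hw : ∀ a, Nullable env s a ↔ w = a)
    (hk : ¬ InFirst env k s) : LookaheadEquiv kd env k ⟨A, s, c⟩ (plug w c) := by
  refine ⟨not_hasConflict_plug hnc ((hw w).mpr rfl), fun t ts v hkt => ?_⟩
  rw [matches_unfocusF_plug_iff, unfocusF_mk,
    matches_unfocus_iff_of_not_inFirst (by simpa [hkt] using hk)]
  simp [hw]

theorem disj_left {s₁ s₂ : Syn Token Kind Var A} {c : Ctx Token Kind Var A B}
    (hnc : ¬ HasConflict env (unfocus (.disj s₁ s₂) c)) (h₁ : InFirst env k s₁) :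
    LookaheadEquiv kd env k ⟨A, .disj s₁ s₂, c⟩ ⟨A, s₁, c⟩ := by
  refine ⟨fun h => hnc (ConflictLE.disj_left.unfocus c h), fun t ts v hk => ?_⟩
  subst hk
  have h₂ : ¬ InFirst env (kd t) s₂ := fun h₂ => hnc ((HasConflict.disjFF h₁ h₂).unfocus c)
  rw [unfocusF_mk, unfocusF_mk, matches_unfocus_disj_iff,
    or_iff_left (not_matches_unfocus_of_inSNF hnc h₂ fun _ hn => .disjFN h₁ hn)]

theorem disj_right {s₁ s₂ : Syn Token Kind Var A} {c : Ctx Token Kind Var A B}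
    (hnc : ¬ HasConflict env (unfocus (.disj s₁ s₂) c)) (h₁ : ¬ InFirst env k s₁)
    (h₂ : InFirst env k s₂) : LookaheadEquiv kd env k ⟨A, .disj s₁ s₂, c⟩ ⟨A, s₂, c⟩ := by
  refine ⟨fun h => hnc (ConflictLE.disj_right.unfocus c h), fun t ts v hk => ?_⟩
  subst hk
  rw [unfocusF_mk, unfocusF_mk, matches_unfocus_disj_iff,
    or_iff_right (not_matches_unfocus_of_inSNF hnc h₁ fun _ hn => .disjNF hn h₂)]

theorem var {x : Var A} {c : Ctx Token Kind Var A B}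
    (hnc : ¬ HasConflict env (unfocus (.var x) c)) :
    LookaheadEquiv kd env k ⟨A, .var x, c⟩ ⟨A, env A x, c⟩ :=
  ⟨fun h => hnc (ConflictLE.env_var.unfocus c h), fun t ts v _ => by
    simp [matches_unfocus_iff, matches_var_iff]⟩

theorem consume_elem {t : Token} {c : Ctx Token Kind Var Token B}
    (h : LookaheadEquiv kd env (kd t) fs ⟨Token, .elem (kd t), c⟩) :
    ¬ HasConflict env (unfocusF (⟨Token, .eps t, c⟩ : Focused Token Kind Var B)) ∧
      ∀ ts v, Matches kd env (unfocusF fs) (t :: ts) v ↔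
        Matches kd env (unfocusF (⟨Token, .eps t, c⟩ : Focused Token Kind Var B)) ts v := by
  refine ⟨fun hc => h.1 (ConflictLE.eps_elem.unfocus c hc), fun ts v => ?_⟩
  rw [h.2 t ts v rfl, unfocusF_mk, unfocusF_mk, matches_unfocus_eps_iff, matches_unfocus_iff]
  simp [matches_elem_iff]

end LookaheadEquiv

end Lookahead

section Specifications

variable {Token Kind : Type} {Var : Type → Type}
variable (env : ∀ A : Type, Var A → Syn Token Kind Var A)
variable (nullOpt : ∀ {A : Type}, Syn Token Kind Var A → Option A)

def NullOptSpec : Prop :=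
  ∀ {A : Type} (s : Syn Token Kind Var A), ¬ HasConflict env s →
    ∀ v : A, nullOpt s = some v ↔ Nullable env s v

structure LocateSpec
    (locate : ∀ {B : Type}, Kind → Focused Token Kind Var B → Option (Focused Token Kind Var B)) :
    Prop where
  first : ∀ {A B : Type} (k : Kind) (s : Syn Token Kind Var A) (c : Ctx Token Kind Var A B),
    InFirst env k s → locate k (⟨A, s, c⟩ : Focused Token Kind Var B) =
      some (⟨A, s, c⟩ : Focused Token Kind Var B)
  plug : ∀ {A B : Type} (k : Kind) (s : Syn Token Kind Var A) (c : Ctx Token Kind Var A B)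
    (v : A), ¬ InFirst env k s → nullOpt s = some v → c.isNil = false →
      locate k (⟨A, s, c⟩ : Focused Token Kind Var B) = locate k (plug v c)
  none_of_not_nullable : ∀ {A B : Type} (k : Kind) (s : Syn Token Kind Var A)
    (c : Ctx Token Kind Var A B), ¬ InFirst env k s → nullOpt s = none →
      locate k (⟨A, s, c⟩ : Focused Token Kind Var B) = none
  none_of_nil : ∀ {A : Type} (k : Kind) (s : Syn Token Kind Var A), ¬ InFirst env k s →
    locate k (⟨A, s, Ctx.nil⟩ : Focused Token Kind Var A) = none

structure PierceSpec
    (pierce : ∀ {A B : Type}, Kind → Syn Token Kind Var A → Ctx Token Kind Var A B →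
      Ctx Token Kind Var Token B) : Prop where
  elem : ∀ {B : Type} (k : Kind) (c : Ctx Token Kind Var Token B), pierce k (Syn.elem k) c = c
  disj_left : ∀ {A B : Type} (k : Kind) (s₁ s₂ : Syn Token Kind Var A)
    (c : Ctx Token Kind Var A B),
    ¬ HasConflict env (Syn.disj s₁ s₂) → InFirst env k (Syn.disj s₁ s₂) →
    InFirst env k s₁ → pierce k (Syn.disj s₁ s₂) c = pierce k s₁ c
  disj_right : ∀ {A B : Type} (k : Kind) (s₁ s₂ : Syn Token Kind Var A)
    (c : Ctx Token Kind Var A B),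
    ¬ HasConflict env (Syn.disj s₁ s₂) → InFirst env k (Syn.disj s₁ s₂) →
    ¬ InFirst env k s₁ → pierce k (Syn.disj s₁ s₂) c = pierce k s₂ c
  seqn_left : ∀ {A B C : Type} (k : Kind) (s₁ : Syn Token Kind Var A)
    (s₂ : Syn Token Kind Var B) (c : Ctx Token Kind Var (A × B) C),
    ¬ HasConflict env (Syn.seqn s₁ s₂) → InFirst env k (Syn.seqn s₁ s₂) →
    (nullOpt s₁ = none ∨ InFirst env k s₁) →
    pierce k (Syn.seqn s₁ s₂) c = pierce k s₁ (Ctx.cons (Layer.followBy s₂) c)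
  seqn_right : ∀ {A B C : Type} (k : Kind) (s₁ : Syn Token Kind Var A)
    (s₂ : Syn Token Kind Var B) (c : Ctx Token Kind Var (A × B) C) (v : A),
    ¬ HasConflict env (Syn.seqn s₁ s₂) → InFirst env k (Syn.seqn s₁ s₂) →
    nullOpt s₁ = some v → ¬ InFirst env k s₁ →
    pierce k (Syn.seqn s₁ s₂) c = pierce k s₂ (Ctx.cons (Layer.prepend v) c)
  map : ∀ {A B C : Type} (k : Kind) (f : A → B) (s : Syn Token Kind Var A)
    (c : Ctx Token Kind Var B C),
    ¬ HasConflict env (Syn.map f s) → InFirst env k (Syn.map f s) →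
    pierce k (Syn.map f s) c = pierce k s (Ctx.cons (Layer.apply f) c)
  var : ∀ {A B : Type} (k : Kind) (x : Var A) (c : Ctx Token Kind Var A B),
    ¬ HasConflict env (Syn.var x : Syn Token Kind Var A) →
    InFirst env k (Syn.var x : Syn Token Kind Var A) →
    pierce k (Syn.var x) c = pierce k (env A x) c

structure ResultSpec (result : ∀ {B : Type}, Focused Token Kind Var B → Option B) : Prop where
  none : ∀ {A B : Type} (s : Syn Token Kind Var A) (c : Ctx Token Kind Var A B),
    nullOpt s = none → result (⟨A, s, c⟩ : Focused Token Kind Var B) = none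
  nil : ∀ {A : Type} (s : Syn Token Kind Var A) (v : A),
    nullOpt s = some v → result (⟨A, s, Ctx.nil⟩ : Focused Token Kind Var A) = some v
  plug : ∀ {A B : Type} (s : Syn Token Kind Var A) (c : Ctx Token Kind Var A B) (v : A),
    nullOpt s = some v → c.isNil = false →
      result (⟨A, s, c⟩ : Focused Token Kind Var B) = result (plug v c)

end Specifications

section Correctness

variable {Token Kind : Type} {Var : Type → Type}
variable {kd : Token → Kind} {env : ∀ A : Type, Var A → Syn Token Kind Var A}
variable {nullOpt : ∀ {A : Type}, Syn Token Kind Var A → Option A}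

theorem NullOptSpec.nullable_iff (hnull : NullOptSpec env @nullOpt) {A : Type}
    {s : Syn Token Kind Var A} (hs : ¬ HasConflict env s) {w : A} (hw : nullOpt s = some w)
    (a : A) : Nullable env s a ↔ w = a := by
  rw [← hnull s hs, hw, Option.some_inj]

theorem NullOptSpec.not_nullable (hnull : NullOptSpec env @nullOpt) {A : Type}
    {s : Syn Token Kind Var A} (hs : ¬ HasConflict env s) (hw : nullOpt s = none) (a : A) :
    ¬ Nullable env s a := by
  simp [← hnull s hs, hw]

theorem result_eq_some_iff {result : ∀ {B : Type}, Focused Token Kind Var B → Option B}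
    (hnull : NullOptSpec env @nullOpt) (hres : ResultSpec @nullOpt @result) {B : Type}
    (fs : Focused Token Kind Var B) (hfs : ¬ HasConflict env (unfocusF fs)) (v : B) :
    result fs = some v ↔ Matches kd env (unfocusF fs) [] v := by
  induction fs using Focused.plug_induction with
  | step s c ih =>
    rw [unfocusF_mk] at hfs ⊢
    have hs : ¬ HasConflict env s := fun h => hfs (h.unfocus c)
    rw [matches_unfocus_iff_of_not_inFirst (by simp)]
    cases hw : nullOpt s with
    | none =>
      rw [hres.none s c hw]
      simpa using fun a hn _ => hnull.not_nullable hs hw a hn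
    | some w =>
      simp only [hnull.nullable_iff hs hw, exists_eq_left']
      cases c with
      | nil => simp [hres.nil s w hw, CtxMatches]
      | cons l c =>
        have hplug := not_hasConflict_plug hfs ((hnull.nullable_iff hs hw w).mpr rfl)
        rw [hres.plug s _ w hw rfl, ih rfl w hplug, matches_unfocusF_plug_iff]

theorem locate_spec
    {locate : ∀ {B : Type}, Kind → Focused Token Kind Var B → Option (Focused Token Kind Var B)}
    (hnull : NullOptSpec env @nullOpt) (hloc : LocateSpec env @nullOpt @locate) (k : Kind)
    {B : Type} (fs : Focused Token Kind Var B) (hfs : ¬ HasConflict env (unfocusF fs)) :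
    (∀ fs', locate k fs = some fs' → InFirst env k fs'.2.1 ∧ LookaheadEquiv kd env k fs fs') ∧
      (locate k fs = none → ∀ t ts v, kd t = k → ¬ Matches kd env (unfocusF fs) (t :: ts) v) := by
  induction fs using Focused.plug_induction with
  | step s c ih =>
    by_cases hf : InFirst env k s
    · rw [hloc.first k s c hf]
      refine ⟨?_, fun h => nomatch h⟩
      rintro _ ⟨⟩
      exact ⟨hf, .refl hfs⟩
    rw [unfocusF_mk] at hfs
    have hs : ¬ HasConflict env s := fun h => hfs (h.unfocus c)
    cases hw : nullOpt s with
    | none =>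
      rw [hloc.none_of_not_nullable k s c hf hw]
      refine ⟨fun _ h => (nomatch h), fun _ t ts v hk => ?_⟩
      rw [unfocusF_mk, matches_unfocus_iff_of_not_inFirst (by simpa [hk] using hf)]
      exact fun ⟨a, hn, _⟩ => hnull.not_nullable hs hw a hn
    | some w =>
      cases c with
      | nil =>
        rw [hloc.none_of_nil k s hf]
        exact ⟨fun _ h => (nomatch h), fun _ t ts v hk hm => hf (hk ▸ hm.inFirst)⟩
      | cons l c =>
        have hplug := LookaheadEquiv.plug (kd := kd) hfs (hnull.nullable_iff hs hw) hf
        obtain ⟨ih_some, ih_none⟩ := ih rfl w hplug.1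
        rw [hloc.plug k s _ w hf hw rfl]
        exact ⟨fun fs' h => (ih_some fs' h).imp_right hplug.trans,
          fun h t ts v hk hm => ih_none h t ts v hk ((hplug.2 t ts v hk).mp hm)⟩

theorem lookaheadEquiv_pierce
    {pierce : ∀ {A B : Type}, Kind → Syn Token Kind Var A → Ctx Token Kind Var A B →
      Ctx Token Kind Var Token B}
    (hnull : NullOptSpec env @nullOpt) (hpierce : PierceSpec env @nullOpt @pierce)
    {A : Type} {k : Kind} {s : Syn Token Kind Var A} (hf : InFirst env k s) {B : Type}
    (c : Ctx Token Kind Var A B) (hnc : ¬ HasConflict env (unfocus s c)) :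
    LookaheadEquiv kd env k ⟨A, s, c⟩ ⟨Token, .elem k, pierce k s c⟩ := by
  induction hf generalizing B with
  | elem k =>
    rw [hpierce.elem]
    exact .refl hnc
  | disjL hf₁ ih =>
    rw [hpierce.disj_left _ _ _ c (fun h => hnc (h.unfocus c)) (.disjL hf₁) hf₁]
    have h := LookaheadEquiv.disj_left (kd := kd) hnc hf₁
    exact h.trans (ih c h.1)
  | @disjR _ k s₁ s₂ hf₂ ih =>
    have hd : ¬ HasConflict env (.disj s₁ s₂) := fun h => hnc (h.unfocus c)
    have hf₁ : ¬ InFirst env k s₁ := fun hf₁ => hd (.disjFF hf₁ hf₂)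
    rw [hpierce.disj_right _ _ _ c hd (.disjR hf₂) hf₁]
    have h := LookaheadEquiv.disj_right (kd := kd) hnc hf₁ hf₂
    exact h.trans (ih c h.1)
  | seqnL hf₁ hp₂ ih =>
    rw [hpierce.seqn_left _ _ _ c (fun h => hnc (h.unfocus c)) (.seqnL hf₁ hp₂) (.inr hf₁)]
    exact ih _ hnc
  | @seqnR _ _ k s₁ s₂ w hn₁ hf₂ ih =>
    have hseq : ¬ HasConflict env (.seqn s₁ s₂) := fun h => hnc (h.unfocus c)
    have hf₁ : ¬ InFirst env k s₁ := fun hf₁ => hseq (.seqnSF (hn₁.inSNF_of_inFirst hf₁) hf₂)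
    have hs₁ : ¬ HasConflict env s₁ := fun h => hseq (.seqnL h)
    have hw : nullOpt s₁ = some w := (hnull s₁ hs₁ w).mpr hn₁
    rw [hpierce.seqn_right _ _ _ c w hseq (.seqnR hn₁ hf₂) hw hf₁]
    have h := LookaheadEquiv.plug (kd := kd) (c := .cons (.followBy s₂) c) hnc
      (hnull.nullable_iff hs₁ hw) hf₁
    exact h.trans (ih _ h.1)
  | map f hf ih =>
    rw [hpierce.map _ _ _ c (fun h => hnc (h.unfocus c)) (.map f hf)]
    exact ih _ hnc
  | @var _ k x hf ih =>
    rw [hpierce.var _ _ c (fun h => hnc (h.unfocus c)) (.var x hf)]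
    have h := LookaheadEquiv.var (kd := kd) (k := k) hnc
    exact h.trans (ih c h.1)

end Correctness

section

variable {Token Kind : Type} {Var : Type → Type}
variable (kd : Token → Kind) (env : ∀ A : Type, Var A → Syn Token Kind Var A)

theorem zippy_ll1_parse_correct
    (nullOpt : ∀ {A : Type}, Syn Token Kind Var A → Option A)
    (hnull : ∀ {A : Type} (s : Syn Token Kind Var A), ¬ HasConflict env s →
      ∀ v : A, nullOpt s = some v ↔ Nullable env s v)
    (locate : ∀ {B : Type}, Kind → Focused Token Kind Var B →
      Option (Focused Token Kind Var B))
    (hlocate_first : ∀ {A B : Type} (k : Kind) (s : Syn Token Kind Var A)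
      (c : Ctx Token Kind Var A B), InFirst env k s →
      locate k (⟨A, s, c⟩ : Focused Token Kind Var B) =
        some (⟨A, s, c⟩ : Focused Token Kind Var B))
    (hlocate_plug : ∀ {A B : Type} (k : Kind) (s : Syn Token Kind Var A)
      (c : Ctx Token Kind Var A B) (v : A),
      ¬ InFirst env k s → nullOpt s = some v → c.isNil = false →
      locate k (⟨A, s, c⟩ : Focused Token Kind Var B) = locate k (plug v c))
    (hlocate_none₁ : ∀ {A B : Type} (k : Kind) (s : Syn Token Kind Var A)
      (c : Ctx Token Kind Var A B),
      ¬ InFirst env k s → nullOpt s = none →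
      locate k (⟨A, s, c⟩ : Focused Token Kind Var B) = none)
    (hlocate_none₂ : ∀ {A : Type} (k : Kind) (s : Syn Token Kind Var A),
      ¬ InFirst env k s →
      locate k (⟨A, s, Ctx.nil⟩ : Focused Token Kind Var A) = none)
    (pierce : ∀ {A B : Type}, Kind → Syn Token Kind Var A → Ctx Token Kind Var A B →
      Ctx Token Kind Var Token B)
    (hpierce_elem : ∀ {B : Type} (k : Kind) (c : Ctx Token Kind Var Token B),
      pierce k (Syn.elem k) c = c)
    (hpierce_disj₁ : ∀ {A B : Type} (k : Kind) (s₁ s₂ : Syn Token Kind Var A)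
      (c : Ctx Token Kind Var A B),
      ¬ HasConflict env (Syn.disj s₁ s₂) → InFirst env k (Syn.disj s₁ s₂) →
      InFirst env k s₁ → pierce k (Syn.disj s₁ s₂) c = pierce k s₁ c)
    (hpierce_disj₂ : ∀ {A B : Type} (k : Kind) (s₁ s₂ : Syn Token Kind Var A)
      (c : Ctx Token Kind Var A B),
      ¬ HasConflict env (Syn.disj s₁ s₂) → InFirst env k (Syn.disj s₁ s₂) →
      ¬ InFirst env k s₁ → pierce k (Syn.disj s₁ s₂) c = pierce k s₂ c)
    (hpierce_seqn₁ : ∀ {A B C : Type} (k : Kind) (s₁ : Syn Token Kind Var A)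
      (s₂ : Syn Token Kind Var B) (c : Ctx Token Kind Var (A × B) C),
      ¬ HasConflict env (Syn.seqn s₁ s₂) → InFirst env k (Syn.seqn s₁ s₂) →
      (nullOpt s₁ = none ∨ InFirst env k s₁) →
      pierce k (Syn.seqn s₁ s₂) c = pierce k s₁ (Ctx.cons (Layer.followBy s₂) c))
    (hpierce_seqn₂ : ∀ {A B C : Type} (k : Kind) (s₁ : Syn Token Kind Var A)
      (s₂ : Syn Token Kind Var B) (c : Ctx Token Kind Var (A × B) C) (v : A),
      ¬ HasConflict env (Syn.seqn s₁ s₂) → InFirst env k (Syn.seqn s₁ s₂) →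
      nullOpt s₁ = some v → ¬ InFirst env k s₁ →
      pierce k (Syn.seqn s₁ s₂) c = pierce k s₂ (Ctx.cons (Layer.prepend v) c))
    (hpierce_map : ∀ {A B C : Type} (k : Kind) (f : A → B) (s : Syn Token Kind Var A)
      (c : Ctx Token Kind Var B C),
      ¬ HasConflict env (Syn.map f s) → InFirst env k (Syn.map f s) →
      pierce k (Syn.map f s) c = pierce k s (Ctx.cons (Layer.apply f) c))
    (hpierce_var : ∀ {A B : Type} (k : Kind) (x : Var A) (c : Ctx Token Kind Var A B),
      ¬ HasConflict env (Syn.var x : Syn Token Kind Var A) →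
      InFirst env k (Syn.var x : Syn Token Kind Var A) →
      pierce k (Syn.var x) c = pierce k (env A x) c)
    (deriveF : ∀ {B : Type}, Token → Focused Token Kind Var B →
      Option (Focused Token Kind Var B))
    (hderiveF_none : ∀ {B : Type} (t : Token) (fs : Focused Token Kind Var B),
      locate (kd t) fs = none → deriveF t fs = none)
    (hderiveF_some : ∀ {B : Type} (t : Token) (fs fs' : Focused Token Kind Var B),
      locate (kd t) fs = some fs' →
      deriveF t fs =
        some (⟨Token, Syn.eps t, pierce (kd t) fs'.2.1 fs'.2.2⟩ : Focused Token Kind Var B))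
    (result : ∀ {B : Type}, Focused Token Kind Var B → Option B)
    (hresult_none : ∀ {A B : Type} (s : Syn Token Kind Var A) (c : Ctx Token Kind Var A B),
      nullOpt s = none → result (⟨A, s, c⟩ : Focused Token Kind Var B) = none)
    (hresult_nil : ∀ {A : Type} (s : Syn Token Kind Var A) (v : A),
      nullOpt s = some v → result (⟨A, s, Ctx.nil⟩ : Focused Token Kind Var A) = some v)
    (hresult_plug : ∀ {A B : Type} (s : Syn Token Kind Var A) (c : Ctx Token Kind Var A B)
      (v : A), nullOpt s = some v → c.isNil = false →
      result (⟨A, s, c⟩ : Focused Token Kind Var B) = result (plug v c))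
    (fparse : ∀ {B : Type}, Focused Token Kind Var B → List Token → Option B)
    (hfparse_nil : ∀ {B : Type} (fs : Focused Token Kind Var B), fparse fs [] = result fs)
    (hfparse_none : ∀ {B : Type} (fs : Focused Token Kind Var B) (t : Token) (ts : List Token),
      deriveF t fs = none → fparse fs (t :: ts) = none)
    (hfparse_some : ∀ {B : Type} (fs fs' : Focused Token Kind Var B) (t : Token)
      (ts : List Token), deriveF t fs = some fs' → fparse fs (t :: ts) = fparse fs' ts)
    {A : Type} (s : Syn Token Kind Var A) (hs : ¬ HasConflict env s)
    (ts : List Token) (v : A) :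
    fparse (focusF s) ts = some v ↔ Matches kd env s ts v := by
  have hloc : LocateSpec env @nullOpt @locate :=
    ⟨hlocate_first, hlocate_plug, hlocate_none₁, hlocate_none₂⟩
  have hpierce : PierceSpec env @nullOpt @pierce := ⟨hpierce_elem, hpierce_disj₁,
    hpierce_disj₂, hpierce_seqn₁, hpierce_seqn₂, hpierce_map, hpierce_var⟩
  have hres : ResultSpec @nullOpt @result := ⟨hresult_none, hresult_nil, hresult_plug⟩
  suffices ∀ ts {B : Type} (fs : Focused Token Kind Var B), ¬ HasConflict env (unfocusF fs) →
      ∀ v, fparse fs ts = some v ↔ Matches kd env (unfocusF fs) ts v from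
    this ts (focusF s) hs v
  intro ts
  induction ts with
  | nil =>
    intro B fs hfs v
    rw [hfparse_nil]
    exact result_eq_some_iff @hnull hres fs hfs v
  | cons t ts ih =>
    intro B fs hfs v
    obtain ⟨hsome, hnone⟩ := locate_spec (kd := kd) @hnull hloc (kd t) fs hfs
    cases hl : locate (kd t) fs with
    | none =>
      rw [hfparse_none fs t ts (hderiveF_none t fs hl)]
      simpa using hnone hl t ts v rfl
    | some fs' =>
      obtain ⟨hfirst, hequiv⟩ := hsome fs' hl
      have hderiv :=
        (hequiv.trans (lookaheadEquiv_pierce @hnull hpierce hfirst _ hequiv.1)).consume_elem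
      rw [hfparse_some fs _ t ts (hderiveF_some t fs fs' hl), ih _ hderiv.1, hderiv.2]

end
end

section
/- If locate succeeds, the new focal point starts with the given kind: for every LL(1) focused syntax (s, c) and kind k, if locate k (s, c) = some (s', c') then k ∈ First s'. -/
set_option autoImplicit false

/-! `locate` can only return through its first equation, whose focal point has `k` in its First
set; every other equation fails or recurses through `plug`. Following that recursion is a
structural induction on the context. -/

section

variable {Token Kind : Type} {Var : Type → Type}
  {env : ∀ A : Type, Var A → Syn Token Kind Var A}
  {nullOpt : ∀ {A : Type}, Syn Token Kind Var A → Option A}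
  {locate : ∀ {B : Type}, Kind → Focused Token Kind Var B → Option (Focused Token Kind Var B)}

/-- The defining equations of `locate`, with `nullOpt` in the role of `nullable?`. -/
structure LocateSpec_s6 (env : ∀ A : Type, Var A → Syn Token Kind Var A)
    (nullOpt : ∀ {A : Type}, Syn Token Kind Var A → Option A)
    (locate : ∀ {B : Type}, Kind → Focused Token Kind Var B →
      Option (Focused Token Kind Var B)) : Prop where
  eq_self_of_inFirst : ∀ {A B : Type} (k : Kind) (s : Syn Token Kind Var A)
    (c : Ctx Token Kind Var A B), InFirst env k s →
    locate k (⟨A, s, c⟩ : Focused Token Kind Var B) = some ⟨A, s, c⟩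
  eq_plug : ∀ {A B : Type} (k : Kind) (s : Syn Token Kind Var A)
    (c : Ctx Token Kind Var A B) (v : A),
    ¬ InFirst env k s → nullOpt s = some v → c.isNil = false →
    locate k (⟨A, s, c⟩ : Focused Token Kind Var B) = locate k (plug v c)
  eq_none_of_nullOpt_eq_none : ∀ {A B : Type} (k : Kind) (s : Syn Token Kind Var A)
    (c : Ctx Token Kind Var A B), ¬ InFirst env k s → nullOpt s = none →
    locate k (⟨A, s, c⟩ : Focused Token Kind Var B) = none
  eq_none_of_nil : ∀ {A : Type} (k : Kind) (s : Syn Token Kind Var A),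
    ¬ InFirst env k s → locate k (⟨A, s, Ctx.nil⟩ : Focused Token Kind Var A) = none

def FindsFirst (env : ∀ A : Type, Var A → Syn Token Kind Var A)
    (locate : ∀ {B : Type}, Kind → Focused Token Kind Var B →
      Option (Focused Token Kind Var B))
    {B : Type} (k : Kind) (fs : Focused Token Kind Var B) : Prop :=
  ∀ fs', locate k fs = some fs' → InFirst env k fs'.2.1

namespace LocateSpec_s6

variable (k : Kind)

theorem findsFirst_of_inFirst (spec : LocateSpec_s6 env @nullOpt @locate) {A B : Type}
    {s : Syn Token Kind Var A} (c : Ctx Token Kind Var A B) (hfirst : InFirst env k s) :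
    FindsFirst env @locate k (⟨A, s, c⟩ : Focused Token Kind Var B) := by
  intro fs' h
  rw [spec.eq_self_of_inFirst k s c hfirst] at h
  cases h
  exact hfirst

theorem findsFirst_nil (spec : LocateSpec_s6 env @nullOpt @locate) {A : Type}
    (s : Syn Token Kind Var A) :
    FindsFirst env @locate k (⟨A, s, Ctx.nil⟩ : Focused Token Kind Var A) := by
  by_cases hfirst : InFirst env k s
  · exact spec.findsFirst_of_inFirst k _ hfirst
  · simp [FindsFirst, spec.eq_none_of_nil k s hfirst]

theorem findsFirst_cons_of_forall_plug (spec : LocateSpec_s6 env @nullOpt @locate)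
    {A B C : Type} (s : Syn Token Kind Var A) (l : Layer Token Kind Var A B)
    (c : Ctx Token Kind Var B C)
    (hplug : ∀ v, FindsFirst env @locate k (plug v (Ctx.cons l c))) :
    FindsFirst env @locate k (⟨A, s, Ctx.cons l c⟩ : Focused Token Kind Var C) := by
  by_cases hfirst : InFirst env k s
  · exact spec.findsFirst_of_inFirst k _ hfirst
  cases hnull : nullOpt s with
  | none => simp [FindsFirst, spec.eq_none_of_nullOpt_eq_none k s _ hfirst hnull]
  | some v =>
    intro fs' h
    rw [spec.eq_plug k s (Ctx.cons l c) v hfirst hnull rfl] at h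
    exact hplug v fs' h

/-- `plug` through a `followBy` layer yields a `prepend` layer over the same tail, and plugging
into that layer only recurses into the tail, so the recursion is structural. -/
theorem findsFirst_plug (spec : LocateSpec_s6 env @nullOpt @locate) :
    ∀ {A B : Type} (v : A) (c : Ctx Token Kind Var A B), FindsFirst env @locate k (plug v c)
  | _, _, v, Ctx.nil => spec.findsFirst_nil k (Syn.eps v)
  | _, _, v, Ctx.cons (Layer.apply f) c => findsFirst_plug spec (f v) c
  | _, _, v, Ctx.cons (Layer.prepend v') c => findsFirst_plug spec (v', v) c
  | _, _, v, Ctx.cons (Layer.followBy s) c =>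
    spec.findsFirst_cons_of_forall_plug k s _ c fun u => findsFirst_plug spec (v, u) c

theorem findsFirst (spec : LocateSpec_s6 env @nullOpt @locate) {A B : Type}
    (s : Syn Token Kind Var A) :
    ∀ c : Ctx Token Kind Var A B,
      FindsFirst env @locate k (⟨A, s, c⟩ : Focused Token Kind Var B)
  | Ctx.nil => spec.findsFirst_nil k s
  | Ctx.cons l c => spec.findsFirst_cons_of_forall_plug k s l c (spec.findsFirst_plug k · _)

end LocateSpec_s6

end

section

variable {Token Kind : Type} {Var : Type → Type}
variable (kd : Token → Kind) (env : ∀ A : Type, Var A → Syn Token Kind Var A)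

theorem locate_some_first
    (nullOpt : ∀ {A : Type}, Syn Token Kind Var A → Option A)
    (locate : ∀ {B : Type}, Kind → Focused Token Kind Var B →
      Option (Focused Token Kind Var B))
    (hlocate_first : ∀ {A B : Type} (k : Kind) (s : Syn Token Kind Var A)
      (c : Ctx Token Kind Var A B), InFirst env k s →
      locate k (⟨A, s, c⟩ : Focused Token Kind Var B) =
        some (⟨A, s, c⟩ : Focused Token Kind Var B))
    (hlocate_plug : ∀ {A B : Type} (k : Kind) (s : Syn Token Kind Var A)
      (c : Ctx Token Kind Var A B) (v : A),
      ¬ InFirst env k s → nullOpt s = some v → c.isNil = false →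
      locate k (⟨A, s, c⟩ : Focused Token Kind Var B) = locate k (plug v c))
    (hlocate_none₁ : ∀ {A B : Type} (k : Kind) (s : Syn Token Kind Var A)
      (c : Ctx Token Kind Var A B),
      ¬ InFirst env k s → nullOpt s = none →
      locate k (⟨A, s, c⟩ : Focused Token Kind Var B) = none)
    (hlocate_none₂ : ∀ {A : Type} (k : Kind) (s : Syn Token Kind Var A),
      ¬ InFirst env k s →
      locate k (⟨A, s, Ctx.nil⟩ : Focused Token Kind Var A) = none)
    {A B : Type} (s : Syn Token Kind Var A) (c : Ctx Token Kind Var A B) (k : Kind)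
    (fs' : Focused Token Kind Var B)
    (h : locate k (⟨A, s, c⟩ : Focused Token Kind Var B) = some fs') :
    InFirst env k fs'.2.1 := by
  have spec : LocateSpec_s6 env @nullOpt @locate :=
    ⟨hlocate_first, hlocate_plug, hlocate_none₁, hlocate_none₂⟩
  exact spec.findsFirst k s c fs' h

end
end

section
/- If deriveF returns none then the token's kind does not start the focused syntax: for every LL(1) focused syntax (s, c) and token t, if deriveF t (s, c) = none then kind t ∉ First (unfocus (s, c)). -/
set_option autoImplicit false

section

variable {Token Kind : Type} {Var : Type → Type}

/-!
If `k ∈ First (unfocus s c)` but `k ∉ First s`, then `s` is nullable, and `k` stays in the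
First set of the focused syntax obtained by plugging the value of `s` into `c`. Plugging
consumes the context, so `locate k` ends at a focus whose First set contains `k` and never
returns `none`; hence neither does `deriveF`. LL(1) is what identifies `nullable? s` with the
value of `s` at each step: every syntax that comes into focus is `s` or was waiting in a
`followBy` layer of `c`, hence is a subterm of the LL(1) syntax `unfocus s c`.
-/

section SeqnInversion

variable {Token Kind : Type} {Var : Type → Type}
  {env : ∀ A : Type, Var A → Syn Token Kind Var A}
  {A B : Type} {s : Syn Token Kind Var A} {t : Syn Token Kind Var B}

/- `cases` on a hypothesis about `Syn.seqn s t` fails on the index equation `A × B = A' × B'`,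
so these inversions case on a hypothesis about an arbitrary syntax and read off the answer
through a `match`. -/

theorem InFirst.seqn_inv {k : Kind} (h : InFirst env k (Syn.seqn s t)) :
    (InFirst env k s ∧ Productive env t) ∨ ∃ v, Nullable env s v ∧ InFirst env k t := by
  have key : ∀ {C : Type} {u : Syn Token Kind Var C}, InFirst env k u →
      match u with
      | .seqn s t => (InFirst env k s ∧ Productive env t) ∨
          ∃ v, Nullable env s v ∧ InFirst env k t
      | _ => True := by
    intro C u h
    cases h with
    | seqnL h₁ h₂ => exact .inl ⟨h₁, h₂⟩
    | seqnR h₁ h₂ => exact .inr ⟨_, h₁, h₂⟩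
    | _ => trivial
  exact key h

theorem Nullable.seqn_inv {w : A × B} (h : Nullable env (Syn.seqn s t) w) :
    Nullable env s w.1 ∧ Nullable env t w.2 := by
  have key : ∀ {C : Type} {u : Syn Token Kind Var C} {w : C}, Nullable env u w →
      match u, w with
      | .seqn s t, w => Nullable env s w.1 ∧ Nullable env t w.2
      | _, _ => True := by
    intro C u w h
    cases h with
    | seqn h₁ h₂ => exact ⟨h₁, h₂⟩
    | _ => trivial
  exact key h

theorem Productive.seqn_inv (h : Productive env (Syn.seqn s t)) :
    Productive env s ∧ Productive env t := by
  have key : ∀ {C : Type} {u : Syn Token Kind Var C}, Productive env u →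
      match u with
      | .seqn s t => Productive env s ∧ Productive env t
      | _ => True := by
    intro C u h
    cases h with
    | seqn h₁ h₂ => exact ⟨h₁, h₂⟩
    | _ => trivial
  exact key h

end SeqnInversion

/-- Whether `k ∈ First` holds for a syntax built around `s` depends on `s` only through these
three facts, and monotonically so. -/
structure FirstLE {Token Kind : Type} {Var : Type → Type}
    (env : ∀ A : Type, Var A → Syn Token Kind Var A) (k : Kind) {A : Type}
    (s₁ s₂ : Syn Token Kind Var A) : Prop where
  first : InFirst env k s₁ → InFirst env k s₂
  nullable : (∃ v, Nullable env s₁ v) → ∃ v, Nullable env s₂ v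
  productive : Productive env s₁ → Productive env s₂

namespace FirstLE

variable {Token Kind : Type} {Var : Type → Type}
  {env : ∀ A : Type, Var A → Syn Token Kind Var A}
  {k : Kind} {A B : Type} {s₁ s₂ : Syn Token Kind Var A}

theorem map (f : A → B) (h : FirstLE env k s₁ s₂) :
    FirstLE env k (Syn.map f s₁) (Syn.map f s₂) where
  first hf := by
    cases hf with
    | map _ hf => exact .map f (h.first hf)
  nullable := by
    rintro ⟨_, hv⟩
    cases hv with
    | map _ hv =>
      obtain ⟨w, hw⟩ := h.nullable ⟨_, hv⟩
      exact ⟨f w, .map f hw⟩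
  productive hp := by
    cases hp with
    | map _ hp => exact .map f (h.productive hp)

theorem seqn_left (h : FirstLE env k s₁ s₂) (t : Syn Token Kind Var B) :
    FirstLE env k (Syn.seqn s₁ t) (Syn.seqn s₂ t) where
  first hf := by
    rcases hf.seqn_inv with ⟨hf, hp⟩ | ⟨v, hv, hf⟩
    · exact .seqnL (h.first hf) hp
    · obtain ⟨w, hw⟩ := h.nullable ⟨v, hv⟩
      exact .seqnR hw hf
  nullable := by
    rintro ⟨_, hv⟩
    obtain ⟨hv₁, hv₂⟩ := hv.seqn_inv
    obtain ⟨w, hw⟩ := h.nullable ⟨_, hv₁⟩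
    exact ⟨_, .seqn hw hv₂⟩
  productive hp := .seqn (h.productive hp.seqn_inv.1) hp.seqn_inv.2

theorem seqn_right (u : Syn Token Kind Var B) (h : FirstLE env k s₁ s₂) :
    FirstLE env k (Syn.seqn u s₁) (Syn.seqn u s₂) where
  first hf := by
    rcases hf.seqn_inv with ⟨hf, hp⟩ | ⟨v, hv, hf⟩
    · exact .seqnL hf (h.productive hp)
    · exact .seqnR hv (h.first hf)
  nullable := by
    rintro ⟨_, hv⟩
    obtain ⟨hv₁, hv₂⟩ := hv.seqn_inv
    obtain ⟨w, hw⟩ := h.nullable ⟨_, hv₂⟩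
    exact ⟨_, .seqn hv₁ hw⟩
  productive hp := .seqn hp.seqn_inv.1 (h.productive hp.seqn_inv.2)

theorem unfocus : ∀ {A B : Type} {s₁ s₂ : Syn Token Kind Var A}, FirstLE env k s₁ s₂ →
    ∀ c : Ctx Token Kind Var A B, FirstLE env k (unfocus s₁ c) (unfocus s₂ c)
  | _, _, _, _, h, .nil => h
  | _, _, _, _, h, .cons (.apply f) c => (h.map f).unfocus c
  | _, _, _, _, h, .cons (.prepend v) c => (h.seqn_right (.eps v)).unfocus c
  | _, _, _, _, h, .cons (.followBy t) c => (h.seqn_left t).unfocus c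

theorem eps_of_not_inFirst (v : A) (hk : ¬ InFirst env k s₁) :
    FirstLE env k s₁ (Syn.eps v) where
  first hf := absurd hf hk
  nullable _ := ⟨v, .eps v⟩
  productive _ := .eps v

end FirstLE

section FirstThroughContexts

variable {Token Kind : Type} {Var : Type → Type}
  {env : ∀ A : Type, Var A → Syn Token Kind Var A}
  {k : Kind}

theorem inFirst_or_nullable_of_inFirst_unfocus {A B : Type} {s : Syn Token Kind Var A}
    {c : Ctx Token Kind Var A B} (h : InFirst env k (unfocus s c)) :
    InFirst env k s ∨ ∃ v, Nullable env s v := by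
  induction c with
  | nil => exact .inl h
  | cons l c ih =>
    cases l with
    | apply f =>
      rcases ih h with hf | ⟨_, hv⟩
      · cases hf with
        | map _ hf => exact .inl hf
      · cases hv with
        | map _ hv => exact .inr ⟨_, hv⟩
    | prepend v' =>
      rcases ih h with hf | ⟨_, hv⟩
      · rcases hf.seqn_inv with ⟨hf, _⟩ | ⟨_, _, hf⟩
        · cases hf
        · exact .inl hf
      · exact .inr ⟨_, hv.seqn_inv.2⟩
    | followBy t =>
      rcases ih h with hf | ⟨_, hv⟩
      · rcases hf.seqn_inv with ⟨hf, _⟩ | ⟨_, hv, _⟩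
        · exact .inl hf
        · exact .inr ⟨_, hv⟩
      · exact .inr ⟨_, hv.seqn_inv.1⟩

theorem inFirst_unfocusF_plug {A B : Type} {s : Syn Token Kind Var A} {v : A}
    {c : Ctx Token Kind Var A B} (hv : Nullable env s v) (hk : ¬ InFirst env k s)
    (h : InFirst env k (unfocus s c)) : InFirst env k (unfocusF (plug v c)) := by
  induction c with
  | nil => exact absurd h hk
  | cons l c ih =>
    cases l with
    | apply f =>
      refine ih (hv.map f) (fun hf => ?_) h
      cases hf with
      | map _ hf => exact hk hf
    | prepend v' =>
      refine ih ((Nullable.eps v').seqn hv) (fun hf => ?_) h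
      rcases hf.seqn_inv with ⟨hf, _⟩ | ⟨_, _, hf⟩
      · cases hf
      · exact hk hf
    | followBy t => exact (((FirstLE.eps_of_not_inFirst v hk).seqn_left t).unfocus c).first h

end FirstThroughContexts

def Ctx.ConflictFree {Token Kind : Type} {Var : Type → Type}
    (env : ∀ A : Type, Var A → Syn Token Kind Var A) :
    ∀ {A B : Type}, Ctx Token Kind Var A B → Prop
  | _, _, .nil => True
  | _, _, .cons (.apply _) c => c.ConflictFree env
  | _, _, .cons (.prepend _) c => c.ConflictFree env
  | _, _, .cons (.followBy s) c => ¬ HasConflict env s ∧ c.ConflictFree env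

theorem not_hasConflict_and_conflictFree_of_unfocus {Token Kind : Type} {Var : Type → Type}
    {env : ∀ A : Type, Var A → Syn Token Kind Var A} {A B : Type} {s : Syn Token Kind Var A}
    {c : Ctx Token Kind Var A B} (h : ¬ HasConflict env (unfocus s c)) :
    ¬ HasConflict env s ∧ c.ConflictFree env := by
  induction c with
  | nil => exact ⟨h, trivial⟩
  | cons l c ih =>
    cases l with
    | apply f => exact ⟨fun hs => (ih h).1 (.map f hs), (ih h).2⟩
    | prepend v => exact ⟨fun hs => (ih h).1 (.seqnR hs), (ih h).2⟩
    | followBy t =>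
      exact ⟨fun hs => (ih h).1 (.seqnL hs), fun ht => (ih h).1 (.seqnR ht), (ih h).2⟩

/-- The equations of `locate` that do not return `none`, with `nullable? s = some v` read off
from `Nullable s v` for LL(1) `s`. -/
structure LocateSpec_s11 {Token Kind : Type} {Var : Type → Type}
    (env : ∀ A : Type, Var A → Syn Token Kind Var A)
    (locate : ∀ {B : Type}, Kind → Focused Token Kind Var B →
      Option (Focused Token Kind Var B)) : Prop where
  of_inFirst {A B : Type} {k : Kind} {s : Syn Token Kind Var A} {c : Ctx Token Kind Var A B} :
    InFirst env k s → locate k (⟨A, s, c⟩ : Focused Token Kind Var B) = some ⟨A, s, c⟩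
  of_nullable {A B : Type} {k : Kind} {s : Syn Token Kind Var A} {c : Ctx Token Kind Var A B}
    {v : A} :
    ¬ HasConflict env s → ¬ InFirst env k s → Nullable env s v → c.isNil = false →
    locate k (⟨A, s, c⟩ : Focused Token Kind Var B) = locate k (plug v c)

namespace LocateSpec_s11

variable {Token Kind : Type} {Var : Type → Type}
  {env : ∀ A : Type, Var A → Syn Token Kind Var A}
  {locate : ∀ {B : Type}, Kind → Focused Token Kind Var B → Option (Focused Token Kind Var B)}
  {k : Kind}

theorem ne_none_of_plug (hl : LocateSpec_s11 env locate) {A B : Type} {s : Syn Token Kind Var A}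
    {c : Ctx Token Kind Var A B}
    (hplug : ∀ v, InFirst env k (unfocusF (plug v c)) → locate k (plug v c) ≠ none)
    (hs : ¬ HasConflict env s) (hF : InFirst env k (unfocus s c)) :
    locate k (⟨A, s, c⟩ : Focused Token Kind Var B) ≠ none := by
  by_cases hk : InFirst env k s
  · rw [hl.of_inFirst hk]
    exact Option.some_ne_none _
  obtain hk' | ⟨v, hv⟩ := inFirst_or_nullable_of_inFirst_unfocus hF
  · exact absurd hk' hk
  cases c with
  | nil => exact absurd hF hk
  | cons l c =>
    rw [hl.of_nullable hs hk hv rfl]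
    exact hplug v (inFirst_unfocusF_plug hv hk hF)

theorem plug_ne_none (hl : LocateSpec_s11 env locate) {A B : Type} (c : Ctx Token Kind Var A B)
    (hc : c.ConflictFree env) (v : A) (hF : InFirst env k (unfocusF (plug v c))) :
    locate k (plug v c) ≠ none := by
  induction c with
  | nil => cases hF
  | cons l c ih =>
    cases l with
    | apply f => exact ih hc (f v) hF
    | prepend v' => exact ih hc (v', v) hF
    | followBy t => exact hl.ne_none_of_plug (fun w => ih hc.2 (v, w)) hc.1 hF

end LocateSpec_s11

section

variable {Token Kind : Type} {Var : Type → Type}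
variable (kd : Token → Kind) (env : ∀ A : Type, Var A → Syn Token Kind Var A)

theorem deriveF_none_not_first
    (nullOpt : ∀ {A : Type}, Syn Token Kind Var A → Option A)
    (hnull : ∀ {A : Type} (s : Syn Token Kind Var A), ¬ HasConflict env s →
      ∀ v : A, nullOpt s = some v ↔ Nullable env s v)
    (locate : ∀ {B : Type}, Kind → Focused Token Kind Var B →
      Option (Focused Token Kind Var B))
    (hlocate_first : ∀ {A B : Type} (k : Kind) (s : Syn Token Kind Var A)
      (c : Ctx Token Kind Var A B), InFirst env k s →
      locate k (⟨A, s, c⟩ : Focused Token Kind Var B) =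
        some (⟨A, s, c⟩ : Focused Token Kind Var B))
    (hlocate_plug : ∀ {A B : Type} (k : Kind) (s : Syn Token Kind Var A)
      (c : Ctx Token Kind Var A B) (v : A),
      ¬ InFirst env k s → nullOpt s = some v → c.isNil = false →
      locate k (⟨A, s, c⟩ : Focused Token Kind Var B) = locate k (plug v c))
    (pierce : ∀ {A B : Type}, Kind → Syn Token Kind Var A → Ctx Token Kind Var A B →
      Ctx Token Kind Var Token B)
    (deriveF : ∀ {B : Type}, Token → Focused Token Kind Var B →
      Option (Focused Token Kind Var B))
    (hderiveF_some : ∀ {B : Type} (t : Token) (fs fs' : Focused Token Kind Var B),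
      locate (kd t) fs = some fs' →
      deriveF t fs =
        some (⟨Token, Syn.eps t, pierce (kd t) fs'.2.1 fs'.2.2⟩ : Focused Token Kind Var B))
    {A B : Type} (s : Syn Token Kind Var A) (c : Ctx Token Kind Var A B) (t : Token)
    (hll1 : ¬ HasConflict env (unfocus s c))
    (h : deriveF t (⟨A, s, c⟩ : Focused Token Kind Var B) = none) :
    ¬ InFirst env (kd t) (unfocus s c) := by
  intro hF
  have hl : LocateSpec_s11 env locate :=
    ⟨hlocate_first _ _ _,
      fun hs hk hv hnil => hlocate_plug _ _ _ _ hk ((hnull _ hs _).2 hv) hnil⟩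
  obtain ⟨hs, hc⟩ := not_hasConflict_and_conflictFree_of_unfocus hll1
  have hlocate : locate (kd t) (⟨A, s, c⟩ : Focused Token Kind Var B) ≠ none :=
    hl.ne_none_of_plug (hl.plug_ne_none c hc) hs hF
  obtain ⟨fs', hfs'⟩ := Option.ne_none_iff_exists'.mp hlocate
  rw [hderiveF_some t _ fs' hfs'] at h
  exact Option.some_ne_none _ h

end
end
end
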